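/- arXiv:1308.4260 — 2 statements merged into one kernel-verified Lean document; each statement's English description precedes it below -/
import Mathlib

section
/- Let S be a biextendable set over a finite alphabet A such that every word of S is left-extendable by a letter. Let w in S and U, V ⊆ S, and let ℓ in S \ U be such that ℓw in S and Aℓ ∩ S ⊆ U. Set U' = (U \ Aℓ) ∪ {ℓ}. If the generalized extension graphs E_{U',V}(w) and E_{A,V}(ℓw) are both connected, then E_{U,V}(w) is connected. -/
open List

/-- `u` is a factor of `v`. -/
def IsFactor {A : Type*} (u v : List A) : Prop := ∃ p s : List A, v = p ++ u ++ s

/-- A set of words is factorial if it contains the factors of its elements. -/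
def Factorial {A : Type*} (S : Set (List A)) : Prop :=
  ∀ v ∈ S, ∀ u : List A, IsFactor u v → u ∈ S

/-- Left extensions of `w` in `S` taken inside the set `U`. -/
def leftExts {A : Type*} (S U : Set (List A)) (w : List A) : Set (List A) :=
  {l | l ∈ U ∧ l ++ w ∈ S}

/-- Right extensions of `w` in `S` taken inside the set `V`. -/
def rightExts {A : Type*} (S V : Set (List A)) (w : List A) : Set (List A) :=
  {r | r ∈ V ∧ w ++ r ∈ S}

/-- The generalized extension graph `E_{U,V}(w)`: a bipartite undirected graph on the
disjoint union of `U(w)` and `V(w)`, with an edge between `l` and `r` iff `l ++ w ++ r ∈ S`. -/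
def ExtGraph {A : Type*} (S U V : Set (List A)) (w : List A) :
    SimpleGraph (↥(leftExts S U w) ⊕ ↥(rightExts S V w)) where
  Adj x y :=
    (∃ l r, x = Sum.inl l ∧ y = Sum.inr r ∧ l.val ++ w ++ r.val ∈ S) ∨
    (∃ l r, x = Sum.inr r ∧ y = Sum.inl l ∧ l.val ++ w ++ r.val ∈ S)
  symm := by
    refine ⟨?_⟩
    rintro x y (⟨l, r, hx, hy, h⟩ | ⟨l, r, hx, hy, h⟩)
    · exact Or.inr ⟨l, r, hy, hx, h⟩
    · exact Or.inl ⟨l, r, hy, hx, h⟩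
  loopless := by
    refine ⟨?_⟩
    rintro x (⟨l, r, hx, hy, _⟩ | ⟨l, r, hx, hy, _⟩) <;> subst hx <;> simp at hy

/-- The set of one-letter words. -/
def letterWords (A : Type*) : Set (List A) := Set.range fun a : A => [a]

/-- The extension graph `E(w)` of `w` in `S` (extensions by letters). -/
def EGraph {A : Type*} (S : Set (List A)) (w : List A) :=
  ExtGraph S (letterWords A) (letterWords A) w

/-- `S` is biextendable: factorial and every word extends on both sides by a letter. -/
def Biext {A : Type*} (S : Set (List A)) : Prop :=
  Factorial S ∧ ∀ w ∈ S, ∃ a b : A, a :: (w ++ [b]) ∈ S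

/-- `S` is an acyclic set. -/
def SAcyclic {A : Type*} (S : Set (List A)) : Prop :=
  Biext S ∧ ∀ w ∈ S, (EGraph S w).IsAcyclic

/-- `S` is a connected set. -/
def SConn {A : Type*} (S : Set (List A)) : Prop :=
  Biext S ∧ ∀ w ∈ S, (EGraph S w).Connected

/-- `S` is a tree set. -/
def STree {A : Type*} (S : Set (List A)) : Prop :=
  Biext S ∧ ∀ w ∈ S, (EGraph S w).IsTree

/-- A prefix code: nonempty words, none a proper prefix of another. -/
def IsPrefixCode {A : Type*} (X : Set (List A)) : Prop :=
  (∀ x ∈ X, x ≠ []) ∧ ∀ x ∈ X, ∀ y ∈ X, x <+: y → x = y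

/-- A suffix code: nonempty words, none a proper suffix of another. -/
def IsSuffixCode {A : Type*} (X : Set (List A)) : Prop :=
  (∀ x ∈ X, x ≠ []) ∧ ∀ x ∈ X, ∀ y ∈ X, x <:+ y → x = y

/-- A bifix code. -/
def IsBifixCode {A : Type*} (X : Set (List A)) : Prop :=
  IsPrefixCode X ∧ IsSuffixCode X

/-- An `S`-maximal prefix code. -/
def IsSMaxPrefixCode {A : Type*} (S X : Set (List A)) : Prop :=
  IsPrefixCode X ∧ X ⊆ S ∧ ∀ Y : Set (List A), IsPrefixCode Y → Y ⊆ S → X ⊆ Y → X = Y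

/-- An `S`-maximal suffix code. -/
def IsSMaxSuffixCode {A : Type*} (S X : Set (List A)) : Prop :=
  IsSuffixCode X ∧ X ⊆ S ∧ ∀ Y : Set (List A), IsSuffixCode Y → Y ⊆ S → X ⊆ Y → X = Y

/-- An `S`-maximal bifix code. -/
def IsSMaxBifixCode {A : Type*} (S X : Set (List A)) : Prop :=
  IsBifixCode X ∧ X ⊆ S ∧ ∀ Y : Set (List A), IsBifixCode Y → Y ⊆ S → X ⊆ Y → X = Y

/-- The canonical embedding of words over `A` into the free group `F_A`. -/
def toFG {A : Type*} (w : List A) : FreeGroup A := (w.map FreeGroup.of).prod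

/-- A subset of a group is free if it is a basis of the subgroup it generates, i.e. the
induced morphism from the free group over it is injective. -/
def IsFreeSubset {G : Type*} [Group G] (X : Set G) : Prop :=
  Function.Injective ⇑(FreeGroup.lift fun x : X => (x : G))

/-- The submonoid `X*` of `A*` generated by `X`, as a set of words. -/
def star {A : Type*} (X : Set (List A)) : Set (List A) :=
  {w | ∃ l : List (List A), (∀ u ∈ l, u ∈ X) ∧ w = l.flatten}

/-- Every word of `S` is right-extendable by a letter. -/
def RightExtendable {A : Type*} (S : Set (List A)) : Prop :=
  ∀ w ∈ S, ∃ a : A, w ++ [a] ∈ S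

/-- `S` is uniformly recurrent. -/
def UnifRecurrent {A : Type*} (S : Set (List A)) : Prop :=
  RightExtendable S ∧
    ∀ u ∈ S, ∃ n : ℕ, 1 ≤ n ∧ ∀ v ∈ S, v.length = n → IsFactor u v

/-- `S` is recurrent. -/
def Recurrent {A : Type*} (S : Set (List A)) : Prop :=
  S ≠ {([] : List A)} ∧ Factorial S ∧ ∀ u ∈ S, ∀ w ∈ S, ∃ v ∈ S, u ++ v ++ w ∈ S

/-- The set `Γ_S(w)` of right return words to `w`. -/
def retWords {A : Type*} (S : Set (List A)) (w : List A) : Set (List A) :=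
  {x | x ∈ S ∧ w ++ x ∈ S ∧ ∃ y : List A, y ≠ [] ∧ w ++ x = y ++ w}

/-- The set `R_S(w)` of first right return words to `w`. -/
def firstRet {A : Type*} (S : Set (List A)) (w : List A) : Set (List A) :=
  {x | x ∈ retWords S w ∧ ¬ ∃ y ∈ retWords S w, ∃ z : List A, z ≠ [] ∧ x = y ++ z}

/-- The quantity `m(w) = e(w) - l(w) - r(w) + 1`. -/
noncomputable def mval {A : Type*} (S : Set (List A)) (w : List A) : ℤ :=
  (Set.ncard {p : A × A | p.1 :: (w ++ [p.2]) ∈ S} : ℤ)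
    - (Set.ncard {a : A | a :: w ∈ S} : ℤ) - (Set.ncard {b : A | w ++ [b] ∈ S} : ℤ) + 1

/-- A strong set: factorial and every word is strong or neutral. -/
def SStrong {A : Type*} (S : Set (List A)) : Prop :=
  Factorial S ∧ ∀ w ∈ S, 0 ≤ mval S w

/-- A weak set: factorial and every word is weak or neutral. -/
def SWeak {A : Type*} (S : Set (List A)) : Prop :=
  Factorial S ∧ ∀ w ∈ S, mval S w ≤ 0

/-- A neutral set: factorial and every word is neutral. -/
def SNeutral {A : Type*} (S : Set (List A)) : Prop :=
  Factorial S ∧ ∀ w ∈ S, mval S w = 0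

/-!
Prepending `ℓ` to the left vertices, `a ↦ aℓ`, is a graph morphism `E_{A,V}(ℓw) → E_{U,V}(w)`,
so its image is connected. Collapsing the vertex `ℓ` of `E_{U',V}(w)` onto a point of that image
and keeping every other vertex sends edges to connected pairs: an edge `ℓ — r` becomes a pair in
the image of `E_{A,V}(ℓw)`, since `r` is then a right extension of `ℓw`. The two images cover
`E_{U,V}(w)`, the left vertices `aℓ` coming from the first one, and they meet.
-/

theorem SimpleGraph.Reachable.map_of_adj_reachable {V W : Type*} {G : SimpleGraph V}
    {H : SimpleGraph W} {f : V → W} (hf : ∀ a b, G.Adj a b → H.Reachable (f a) (f b))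
    {x y : V} (h : G.Reachable x y) : H.Reachable (f x) (f y) := by
  rw [SimpleGraph.reachable_iff_reflTransGen] at h ⊢
  exact h.lift' f fun a b hab => (SimpleGraph.reachable_iff_reflTransGen _ _).1 (hf a b hab)

theorem SimpleGraph.connected_of_reachable_on_ranges {V α β : Type*} {G : SimpleGraph V}
    {f : α → V} {g : β → V} (hf : ∀ x y, G.Reachable (f x) (f y))
    (hg : ∀ x y, G.Reachable (g x) (g y)) {a : α} {b : β} (hab : f a = g b)
    (hcover : ∀ v, v ∈ Set.range f ∨ v ∈ Set.range g) : G.Connected := by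
  have hbase : ∀ v, G.Reachable v (f a) := by
    intro v
    rcases hcover v with ⟨x, rfl⟩ | ⟨y, rfl⟩
    · exact hf x a
    · exact hab ▸ hg y b
  have : Nonempty V := ⟨f a⟩
  exact ⟨fun u v => (hbase u).trans (hbase v).symm⟩

namespace ExtGraph

variable {A : Type*} {S U V : Set (List A)} {w l : List A}

def appendLeftHom (hS : Factorial S) {X : Set (List A)}
    (hX : ∀ u ∈ X, u ++ l ∈ S → u ++ l ∈ U) : ExtGraph S X V (l ++ w) →g ExtGraph S U V w where
  toFun
    | .inl u => .inl ⟨u.1 ++ l, hX u.1 u.2.1 (hS _ u.2.2 _ ⟨[], w, by simp⟩), by simpa using u.2.2⟩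
    | .inr r => .inr ⟨r.1, r.2.1, hS _ r.2.2 _ ⟨l, [], by simp⟩⟩
  map_rel' := by
    rintro _ _ (⟨u, r, rfl, rfl, h⟩ | ⟨u, r, rfl, rfl, h⟩)
    · exact Or.inl ⟨_, _, rfl, rfl, by simpa using h⟩
    · exact Or.inr ⟨_, _, rfl, rfl, by simpa using h⟩

def collapse [DecidableEq A] {U' : Set (List A)} (hU' : ∀ u ∈ U', u ≠ l → u ∈ U)
    (v : leftExts S U w ⊕ rightExts S V w) :
    leftExts S U' w ⊕ rightExts S V w → leftExts S U w ⊕ rightExts S V w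
  | .inl u => if h : u.1 = l then v else .inl ⟨u.1, hU' u.1 u.2.1 h, u.2.2⟩
  | .inr r => .inr r

theorem reachable_collapse [DecidableEq A] {U' : Set (List A)} (hU' : ∀ u ∈ U', u ≠ l → u ∈ U)
    {v : leftExts S U w ⊕ rightExts S V w}
    (hv : ∀ r : rightExts S V w, l ++ w ++ r.1 ∈ S → (ExtGraph S U V w).Reachable v (.inr r))
    (hG : (ExtGraph S U' V w).Preconnected) (x y : leftExts S U' w ⊕ rightExts S V w) :
    (ExtGraph S U V w).Reachable (collapse hU' v x) (collapse hU' v y) := by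
  have hedge : ∀ u r, u.1 ++ w ++ r.1 ∈ S →
      (ExtGraph S U V w).Reachable (collapse hU' v (.inl u)) (collapse hU' v (.inr r)) := by
    intro u r h
    by_cases hu : u.1 = l
    · simpa only [collapse, dif_pos hu] using hv r (hu ▸ h)
    · simp only [collapse, dif_neg hu]
      exact SimpleGraph.Adj.reachable (Or.inl ⟨⟨u.1, _⟩, r, rfl, rfl, h⟩)
  refine (hG x y).map_of_adj_reachable ?_
  rintro _ _ (⟨u, r, rfl, rfl, h⟩ | ⟨u, r, rfl, rfl, h⟩)
  · exact hedge u r h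
  · exact (hedge u r h).symm

end ExtGraph

theorem statement12_general {A : Type*} (S : Set (List A)) (hS : Biext S)
    (w : List A) (U V : Set (List A))
    (l : List A) (hlU : l ∉ U) (hlw : l ++ w ∈ S)
    (hAl : ∀ a : A, a :: l ∈ S → a :: l ∈ U)
    (h1 : (ExtGraph S ((U \ {u | ∃ a : A, u = a :: l}) ∪ {l}) V w).Connected)
    (h2 : (ExtGraph S (letterWords A) V (l ++ w)).Connected) :
    (ExtGraph S U V w).Connected := by
  classical
  let φ := ExtGraph.appendLeftHom (U := U) (V := V) (w := w) hS.1 (X := letterWords A)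
    (by rintro _ ⟨a, rfl⟩; exact hAl a)
  have hφ : ∀ x y, (ExtGraph S U V w).Reachable (φ x) (φ y) :=
    fun x y => (h2.preconnected x y).map φ
  have hU' : ∀ u ∈ (U \ {u | ∃ a : A, u = a :: l}) ∪ {l}, u ≠ l → u ∈ U := by
    rintro u (⟨hu, -⟩ | rfl) hne
    exacts [hu, absurd rfl hne]
  obtain ⟨v₀⟩ := h2.nonempty
  have hψ := ExtGraph.reachable_collapse hU' (v := φ v₀)
    (fun r hr => hφ v₀ (.inr ⟨r.1, r.2.1, by simpa using hr⟩)) h1.preconnected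
  have hlU' : l ∈ leftExts S ((U \ {u | ∃ a : A, u = a :: l}) ∪ {l}) w := ⟨Or.inr rfl, hlw⟩
  refine SimpleGraph.connected_of_reachable_on_ranges hφ hψ (a := v₀) (b := .inl ⟨l, hlU'⟩)
    (by simp [ExtGraph.collapse]) ?_
  rintro (⟨u, hu, huw⟩ | r)
  · by_cases hul : ∃ a : A, u = a :: l
    · obtain ⟨a, rfl⟩ := hul
      exact Or.inl ⟨.inl ⟨[a], ⟨a, rfl⟩, by simpa using huw⟩, rfl⟩
    · have hne : u ≠ l := fun h => hlU (h ▸ hu)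
      exact Or.inr ⟨.inl ⟨u, Or.inl ⟨hu, hul⟩, huw⟩, by simp [ExtGraph.collapse, hne]⟩
  · exact Or.inr ⟨.inr r, rfl⟩

/-- If `E_{U',V}(w)` and `E_{A,V}(ℓw)` are connected, where `U' = (U \ Aℓ) ∪ {ℓ}` and
`Aℓ ∩ S ⊆ U`, then `E_{U,V}(w)` is connected. -/
theorem statement12 {A : Type*} [Fintype A] (S : Set (List A)) (hS : Biext S)
    (hle : ∀ u ∈ S, ∃ a : A, a :: u ∈ S)
    (w : List A) (hw : w ∈ S) (U V : Set (List A)) (hUS : U ⊆ S) (hVS : V ⊆ S)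
    (l : List A) (hl : l ∈ S) (hlU : l ∉ U) (hlw : l ++ w ∈ S)
    (hAl : ∀ a : A, a :: l ∈ S → a :: l ∈ U)
    (h1 : (ExtGraph S ((U \ {u | ∃ a : A, u = a :: l}) ∪ {l}) V w).Connected)
    (h2 : (ExtGraph S (letterWords A) V (l ++ w)).Connected) :
    (ExtGraph S U V w).Connected :=
  statement12_general S hS w U V l hlU hlw hAl h1 h2
end

section
/- Let S be a connected set over a finite alphabet A. For each n ≥ 1, the quotient of the Rauzy graph G_n(S) by the equivalence θ_n is isomorphic, as a labeled graph, to G_{n−1}(S). -/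
open List

/-- Edge of the Rauzy graph `G_n(S)`: `(x, a, y)` with `xa ∈ S ∩ Ay`. -/
def RauzyAdj {A : Type*} (S : Set (List A)) (n : ℕ) (x : List A) (a : A) (y : List A) : Prop :=
  x ∈ S ∧ x.length = n ∧ y ∈ S ∧ y.length = n ∧ x ++ [a] ∈ S ∧ ∃ b : A, x ++ [a] = b :: y

/-- The base relation of `θ_n`: `ax θ bx` when `a` and `b` are joined by a path in the
extension graph `E(x)` (both viewed in the left copy). -/
def thetaBase {A : Type*} (S : Set (List A)) (n : ℕ)
    (u v : {x : List A // x ∈ S ∧ x.length = n}) : Prop :=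
  ∃ (x : List A) (a b : A) (ha : [a] ∈ leftExts S (letterWords A) x)
    (hb : [b] ∈ leftExts S (letterWords A) x),
      u.val = a :: x ∧ v.val = b :: x ∧
      (EGraph S x).Reachable (Sum.inl ⟨[a], ha⟩) (Sum.inl ⟨[b], hb⟩)

/-- The equivalence `θ_n` on the vertices of `G_n(S)`. -/
def thetaSetoid {A : Type*} (S : Set (List A)) (n : ℕ) :
    Setoid {x : List A // x ∈ S ∧ x.length = n} :=
  Relation.EqvGen.setoid (thetaBase S n)


/-! In a connected set every extension graph `E(x)` is connected, so `ax θ_n bx` holds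
whenever `ax, bx ∈ S`: the `θ_n`-classes are exactly the fibres of the map deleting the first
letter, which is onto `S ∩ A^{n-1}` by left extendability. An edge `(x, a, y)` of `G_n(S)`
maps to the edge `(x.tail, a, y.tail)` of `G_{n-1}(S)`, and conversely an edge `(y, a, z)`
of `G_{n-1}(S)` lifts to `(e y, a, y a)` for any left extension `e` of `y a`. -/

section

variable {A : Type*} {S : Set (List A)} {n : ℕ}

theorem Factorial.mem_of_infix (hF : Factorial S) {u v : List A} (hv : v ∈ S) (h : u <:+: v) :
    u ∈ S := by
  obtain ⟨p, s, rfl⟩ := h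
  exact hF _ hv u ⟨p, s, rfl⟩

theorem Biext.exists_cons_mem (hS : Biext S) {w : List A} (hw : w ∈ S) :
    ∃ e : A, e :: w ∈ S := by
  obtain ⟨e, b, h⟩ := hS.2 w hw
  exact ⟨e, hS.1.mem_of_infix h ⟨[], [b], by simp⟩⟩

theorem rauzyAdj_iff (hF : Factorial S) {x y : List A} {a : A} :
    RauzyAdj S n x a y ↔ x.length = n ∧ x ++ [a] ∈ S ∧ y = (x ++ [a]).tail := by
  constructor
  · rintro ⟨-, hx, -, -, hxa, b, hb⟩
    exact ⟨hx, hxa, by simp [hb]⟩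
  · rintro ⟨hx, hxa, rfl⟩
    obtain ⟨b, t, hbt⟩ : ∃ b t, x ++ [a] = b :: t := List.exists_cons_of_ne_nil (by simp)
    refine ⟨hF.mem_of_infix hxa (infix_append [] x [a]), hx,
      hF.mem_of_infix hxa (List.tail_suffix _).isInfix, ?_, hxa, b, by simp [hbt]⟩
    simp [hx]

theorem exists_rauzyAdj_tail_iff (hS : Biext S) (hn : 1 ≤ n) {y z : List A} {a : A} :
    (∃ u v : List A, u.tail = y ∧ v.tail = z ∧ RauzyAdj S n u a v) ↔
      RauzyAdj S (n - 1) y a z := by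
  simp only [rauzyAdj_iff hS.1]
  constructor
  · rintro ⟨u, v, rfl, rfl, hu, hua, rfl⟩
    obtain ⟨c, t, rfl⟩ := List.exists_cons_of_ne_nil (ne_nil_of_length_pos (hu ▸ hn))
    refine ⟨by simp [← hu], hS.1.mem_of_infix hua (List.suffix_cons c _).isInfix, ?_⟩
    simp
  · rintro ⟨hy, hya, rfl⟩
    obtain ⟨e, he⟩ := hS.exists_cons_mem hya
    exact ⟨e :: y, y ++ [a], rfl, rfl, by simp [hy]; omega, by simpa using he, rfl⟩

theorem thetaSetoid_rel_iff (hS : SConn S) (hn : 1 ≤ n)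
    {u v : {x : List A // x ∈ S ∧ x.length = n}} :
    thetaSetoid S n u v ↔ u.val.tail = v.val.tail := by
  constructor
  · intro h
    induction h with
    | rel u v huv =>
      obtain ⟨x, a, b, -, -, hu, hv, -⟩ := huv
      simp [hu, hv]
    | refl => rfl
    | symm _ _ _ ih => exact ih.symm
    | trans _ _ _ _ _ ih₁ ih₂ => exact ih₁.trans ih₂
  · obtain ⟨⟨a, t, hu⟩, ⟨b, s, hv⟩⟩ : (∃ a t, u.val = a :: t) ∧ ∃ b s, v.val = b :: s :=
      ⟨List.exists_cons_of_ne_nil (ne_nil_of_length_pos (by rw [u.2.2]; exact hn)),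
        List.exists_cons_of_ne_nil (ne_nil_of_length_pos (by rw [v.2.2]; exact hn))⟩
    simp only [hu, hv, List.tail_cons]
    rintro rfl
    have ha : [a] ∈ leftExts S (letterWords A) t := ⟨⟨a, rfl⟩, by simpa [hu] using u.2.1⟩
    have hb : [b] ∈ leftExts S (letterWords A) t := ⟨⟨b, rfl⟩, by simpa [hv] using v.2.1⟩
    have ht : t ∈ S :=
      hS.1.1.mem_of_infix u.2.1 (by rw [hu]; exact (List.suffix_cons a t).isInfix)
    exact .rel _ _ ⟨t, a, b, ha, hb, hu, hv, (hS.2 t ht).preconnected _ _⟩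

def tailVertex (hF : Factorial S) (u : {x : List A // x ∈ S ∧ x.length = n}) :
    {y : List A // y ∈ S ∧ y.length = n - 1} :=
  ⟨u.val.tail, hF.mem_of_infix u.2.1 (List.tail_suffix _).isInfix, by simp [u.2.2]⟩

theorem tailVertex_surjective (hS : Biext S) (hn : 1 ≤ n) :
    Function.Surjective (tailVertex (n := n) hS.1) := by
  rintro ⟨y, hy, hyn⟩
  obtain ⟨e, he⟩ := hS.exists_cons_mem hy
  exact ⟨⟨e :: y, he, by simp [hyn]; omega⟩, rfl⟩

noncomputable def thetaQuotientEquiv (hS : SConn S) (hn : 1 ≤ n) :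
    Quotient (thetaSetoid S n) ≃ {y : List A // y ∈ S ∧ y.length = n - 1} :=
  (Quotient.congrRight fun _ _ => by
      rw [thetaSetoid_rel_iff hS hn, Setoid.ker_def, Subtype.ext_iff]; rfl).trans
    (Setoid.quotientKerEquivOfSurjective (tailVertex hS.1.1) (tailVertex_surjective hS.1 hn))

theorem thetaQuotientEquiv_mk (hS : SConn S) (hn : 1 ≤ n)
    (u : {x : List A // x ∈ S ∧ x.length = n}) :
    (thetaQuotientEquiv hS hn (Quotient.mk _ u)).val = u.val.tail :=
  rfl

end

theorem statement15_general {A : Type*} (S : Set (List A)) (hS : SConn S)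
    (n : ℕ) (hn : 1 ≤ n) :
    ∃ φ : Quotient (thetaSetoid S n) ≃ {y : List A // y ∈ S ∧ y.length = n - 1},
      ∀ (c d : Quotient (thetaSetoid S n)) (a : A),
        (∃ u v, Quotient.mk (thetaSetoid S n) u = c ∧
            Quotient.mk (thetaSetoid S n) v = d ∧ RauzyAdj S n u.val a v.val)
          ↔ RauzyAdj S (n - 1) (φ c).val a (φ d).val := by
  refine ⟨thetaQuotientEquiv hS hn, fun c d a => ?_⟩
  induction c using Quotient.ind with | _ u₀ =>
  induction d using Quotient.ind with | _ v₀ =>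
  simp only [thetaQuotientEquiv_mk, Quotient.eq, thetaSetoid_rel_iff hS hn]
  rw [← exists_rauzyAdj_tail_iff hS.1 hn]
  constructor
  · rintro ⟨u, v, hu, hv, h⟩
    exact ⟨u, v, hu, hv, h⟩
  · rintro ⟨u, v, hu, hv, h⟩
    exact ⟨⟨u, h.1, h.2.1⟩, ⟨v, h.2.2.1, h.2.2.2.1⟩, hu, hv, h⟩

/-- For a connected set `S`, the quotient of the Rauzy graph `G_n(S)` by the equivalence
`θ_n` is isomorphic, as a labeled graph, to `G_{n-1}(S)`. -/
theorem statement15 {A : Type*} [Fintype A] (S : Set (List A)) (hS : SConn S)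
    (n : ℕ) (hn : 1 ≤ n) :
    ∃ φ : Quotient (thetaSetoid S n) ≃ {y : List A // y ∈ S ∧ y.length = n - 1},
      ∀ (c d : Quotient (thetaSetoid S n)) (a : A),
        (∃ u v, Quotient.mk (thetaSetoid S n) u = c ∧
            Quotient.mk (thetaSetoid S n) v = d ∧ RauzyAdj S n u.val a v.val)
          ↔ RauzyAdj S (n - 1) (φ c).val a (φ d).val :=
  statement15_general S hS n hn
end
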